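/- arXiv:2407.08656 — 2 statements merged into one kernel-verified Lean document; each statement's English description precedes it below -/
import Mathlib

section
/- Assume κ₂, …, κ_n are all nonzero, and for each 1 ≤ m ≤ n define u_{m,1} = −c_m and u_{m,i} = ((−1)^i/[κ_i]!) ∂_{t₀}^{i−1} c_m for 2 ≤ i ≤ m, with the convention u_{m,i} = 0 for i > m. Then for every 0 ≤ j < n the following identities hold on ℝ^{n+1}: (a) ∂u_{n,n}/∂t_j = 0; (b) ∂u_{n,i}/∂t_j + κ_{i+1} u_{n,i+1} = 0 for max(j,1) ≤ i ≤ n−1; (c) ∂u_{n,i}/∂t_j + κ_{i+1}(u_{n,i+1} − u_{j,i+1}) = 0 for 1 ≤ i ≤ j−1. -/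
/-- `κₘ = ρ + m - 1`. -/
noncomputable def kappa (ρ : ℝ) (m : ℕ) : ℝ := ρ + m - 1

/-- `[κ₁]! = 1`, `[κᵣ]! = κ₂κ₃⋯κᵣ` for `r ≥ 2` (and `[κ₀]! = 1` by convention). -/
noncomputable def kfact (ρ : ℝ) : ℕ → ℝ
  | 0 => 1
  | 1 => 1
  | (r + 2) => kfact ρ (r + 1) * kappa ρ (r + 2)

/-- `τₘ = t₀ + t₁ + ⋯ + tₘ`. -/
noncomputable def tau (t : ℕ → ℝ) (m : ℕ) : ℝ := ∑ i ∈ Finset.range (m + 1), t i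

/-- The `s`-fold iterate of the integration operator `(∂ₜ⁻¹ f)(x) = ∫₀ˣ f`. -/
noncomputable def iInt : ℕ → (ℝ → ℝ) → ℝ → ℝ
  | 0, f => f
  | (s + 1), f => fun x => ∫ y in (0:ℝ)..x, iInt s f y

/-- Partial derivative `∂f/∂tⱼ` of a vector-valued function of the variables
`t = (t₀, t₁, t₂, …)`. -/
noncomputable def pdG {𝔤 : Type*} [NormedAddCommGroup 𝔤] [NormedSpace ℝ 𝔤]
    (j : ℕ) (f : (ℕ → ℝ) → 𝔤) (t : ℕ → ℝ) : 𝔤 :=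
  deriv (fun s => f (Function.update t j s)) (t j)

/-- Iterated partial derivative `∂ᵏ/∂t₀ᵏ`. -/
noncomputable def pd0iter : ℕ → ((ℕ → ℝ) → ℝ) → (ℕ → ℝ) → ℝ
  | 0, f => f
  | (k + 1), f => pdG 0 (pd0iter k f)

/-- The function `cₙ(t₀, …, tₙ)` of the paper:
`cₙ = Σ_{m=2}^{n-1} Σ_{r=2}^{m} Σ_{s=1}^{r-1} ((-1)^{r-1}[κᵣ]!/(r-s-1)!) τ_{m-1}^{r-s-1}
((∂ₜₘ⁻¹)ˢ a_{m,r})(tₘ) + Σ_{r=1}^{n} ((-1)^r [κᵣ]!/(r-1)!) τ_{n-1}^{r-1} a_{n,r}(tₙ)`. -/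
noncomputable def cfun (ρ : ℝ) (a : ℕ → ℕ → ℝ → ℝ) (n : ℕ) (t : ℕ → ℝ) : ℝ :=
  (∑ m ∈ Finset.Icc 2 (n - 1), ∑ r ∈ Finset.Icc 2 m, ∑ s ∈ Finset.Icc 1 (r - 1),
      ((-1 : ℝ) ^ (r - 1) * kfact ρ r / ((r - s - 1).factorial : ℝ))
        * tau t (m - 1) ^ (r - s - 1) * iInt s (a m r) (t m))
    + ∑ r ∈ Finset.Icc 1 n,
        ((-1 : ℝ) ^ r * kfact ρ r / ((r - 1).factorial : ℝ))
          * tau t (n - 1) ^ (r - 1) * a n r (t n)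

/-- The deformation coefficients `u_{m,1} = -cₘ`, `u_{m,i} = ((-1)ⁱ/[κᵢ]!) ∂_{t₀}^{i-1} cₘ`
for `2 ≤ i ≤ m`, with the convention `u_{m,i} = 0` for `i > m`. -/
noncomputable def uA (ρ : ℝ) (a : ℕ → ℕ → ℝ → ℝ) (m i : ℕ) (t : ℕ → ℝ) : ℝ :=
  if m < i then 0
  else if i = 1 then -(cfun ρ a m t)
  else ((-1 : ℝ) ^ i / kfact ρ i) * pd0iter (i - 1) (cfun ρ a m) t

/-!
Write `cₙ(t) = Σ_{m<n} Pₘ(τ_{m-1}, tₘ) + Qₙ(τ_{n-1}, tₙ)` with `Pₘ(y, x)`, `Qₙ(y, x)` polynomial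
in `y`. Every `τ` contains `t₀`, so `∂_{t₀}ᵏ cₙ` is obtained by differentiating `k` times in `y`.
For `j < n`, `∂_{tⱼ}` acts as `∂_y` on `Qₙ` and on the terms with `m > j`, kills those with `m < j`,
and acts as `∂_x` on `Pⱼ`. Since `∂_x (∂⁻¹)ˢ = (∂⁻¹)ˢ⁻¹`, the sum over `s` in `Pⱼ` telescopes to
`∂_x Pⱼ = ∂_y Pⱼ - ∂_y Qⱼ`, whence `∂_{tⱼ} ∂_{t₀}ᵏ cₙ = ∂_{t₀}ᵏ⁺¹ cₙ - ∂_{t₀}ᵏ⁺¹ cⱼ`.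
Now `u_{n,i} = εᵢ ∂_{t₀}ⁱ⁻¹ cₙ` with `εᵢ = (-1)ⁱ/[κᵢ]!`, so that `κ_{i+1} ε_{i+1} = -εᵢ`, and
`∂_{t₀}ᵏ cₘ = 0` for `k ≥ m`; the three identities follow.
-/

open Finset Function

/-- The `k`-th derivative of `y ↦ yᴺ / N!`. -/
noncomputable def divPowDeriv (N k : ℕ) (y : ℝ) : ℝ :=
  if k ≤ N then y ^ (N - k) / (N - k).factorial else 0

lemma divPowDeriv_zero_right (N : ℕ) (y : ℝ) : divPowDeriv N 0 y = y ^ N / N.factorial := by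
  simp [divPowDeriv]

lemma divPowDeriv_succ_succ (N k : ℕ) : divPowDeriv (N + 1) (k + 1) = divPowDeriv N k := by
  funext y
  simp [divPowDeriv, Nat.add_sub_add_right]

lemma divPowDeriv_of_lt {N k : ℕ} (h : N < k) (y : ℝ) : divPowDeriv N k y = 0 := by
  simp [divPowDeriv, Nat.not_le.2 h]

lemma hasDerivAt_divPowDeriv (N k : ℕ) (y : ℝ) :
    HasDerivAt (divPowDeriv N k) (divPowDeriv N (k + 1) y) y := by
  rcases lt_or_ge k N with h | h
  · obtain ⟨M, rfl⟩ : ∃ M, N = k + M + 1 := ⟨N - k - 1, by omega⟩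
    have hk : divPowDeriv (k + M + 1) k = fun y : ℝ => y ^ (M + 1) / ((M + 1).factorial : ℝ) := by
      funext y
      simp [divPowDeriv, show k + M + 1 - k = M + 1 by omega, show k ≤ k + M + 1 by omega]
    have hk1 : divPowDeriv (k + M + 1) (k + 1) y = y ^ M / M.factorial := by
      simp [divPowDeriv, show k + M + 1 - (k + 1) = M by omega]
    rw [hk, hk1]
    refine ((hasDerivAt_pow (M + 1) y).div_const ((M + 1).factorial : ℝ)).congr_deriv ?_
    rw [Nat.factorial_succ]
    push_cast
    field_simp
  · have hconst : divPowDeriv N k = fun _ => divPowDeriv N k 0 := by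
      funext y
      simp [divPowDeriv, Nat.sub_eq_zero_of_le h]
    rw [hconst, divPowDeriv_of_lt (show N < k + 1 by omega)]
    exact hasDerivAt_const y _

lemma continuous_iInt {f : ℝ → ℝ} (hf : Continuous f) (s : ℕ) : Continuous (iInt s f) := by
  induction s with
  | zero => exact hf
  | succ s ih => exact intervalIntegral.continuous_primitive (fun a b => ih.intervalIntegrable a b) 0

lemma hasDerivAt_iInt {f : ℝ → ℝ} (hf : Continuous f) (s : ℕ) (x : ℝ) :
    HasDerivAt (iInt (s + 1) f) (iInt s f x) x :=
  ((continuous_iInt hf s).integral_hasStrictDerivAt 0 x).hasDerivAt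

lemma sum_Icc_one_succ {M : Type*} [AddCommMonoid M] (g : ℕ → M) (N : ℕ) :
    ∑ s ∈ Icc 1 (N + 1), g s = g 1 + ∑ s ∈ Icc 1 N, g (s + 1) := by
  induction N with
  | zero => simp
  | succ N ih => rw [sum_Icc_succ_top (by omega), ih, sum_Icc_succ_top (by omega), add_assoc]

/-- `∂_yᵏ Σ_{s=1}^N yᴺ⁻ˢ/(N-s)! ((∂⁻¹)ˢ f)(x)`. -/
noncomputable def iIntPoly (N k : ℕ) (f : ℝ → ℝ) (y x : ℝ) : ℝ :=
  ∑ s ∈ Icc 1 N, divPowDeriv (N - s) k y * iInt s f x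

lemma iIntPoly_succ_succ (N k : ℕ) (f : ℝ → ℝ) :
    iIntPoly (N + 1) (k + 1) f = iIntPoly N k f := by
  funext y x
  rw [iIntPoly, sum_Icc_succ_top (by omega), Nat.sub_self,
    divPowDeriv_of_lt (Nat.succ_pos k), zero_mul, add_zero]
  refine sum_congr rfl fun s hs => ?_
  rw [show N + 1 - s = N - s + 1 by grind, divPowDeriv_succ_succ]

lemma iIntPoly_eq_zero_of_le {N k : ℕ} (h : N ≤ k) (f : ℝ → ℝ) (y x : ℝ) :
    iIntPoly N k f y x = 0 :=
  sum_eq_zero fun s hs => by rw [divPowDeriv_of_lt (by grind), zero_mul]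

lemma hasDerivAt_iIntPoly_fst (N k : ℕ) (f : ℝ → ℝ) (y x : ℝ) :
    HasDerivAt (fun y => iIntPoly N k f y x) (iIntPoly N (k + 1) f y x) y :=
  HasDerivAt.fun_sum fun _ _ => (hasDerivAt_divPowDeriv _ k y).mul_const _

/-- Differentiating in `x` lowers every `s` by one; the term `s = 1` falls out of the sum. -/
lemma hasDerivAt_iIntPoly_snd {f : ℝ → ℝ} (hf : Continuous f) (N k : ℕ) (y x : ℝ) :
    HasDerivAt (fun x => iIntPoly (N + 1) k f y x)
      (divPowDeriv N k y * f x + iIntPoly (N + 1) (k + 1) f y x) x := by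
  have hsplit : (fun x => iIntPoly (N + 1) k f y x) = fun x =>
      divPowDeriv N k y * iInt 1 f x + ∑ s ∈ Icc 1 N, divPowDeriv (N - s) k y * iInt (s + 1) f x := by
    funext x
    simp only [iIntPoly, sum_Icc_one_succ, Nat.add_sub_cancel, Nat.add_sub_add_right]
  rw [hsplit, iIntPoly_succ_succ]
  exact ((hasDerivAt_iInt hf 0 x).const_mul _).add
    (HasDerivAt.fun_sum fun s _ => (hasDerivAt_iInt hf s x).const_mul _)

lemma tau_update_of_lt (t : ℕ → ℝ) {j M : ℕ} (h : M < j) (x : ℝ) :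
    tau (update t j x) M = tau t M :=
  sum_congr rfl fun i hi => update_of_ne (by grind) _ _

lemma tau_update_of_le (t : ℕ → ℝ) {j M : ℕ} (h : j ≤ M) (x : ℝ) :
    tau (update t j x) M = x + (tau t M - t j) := by
  rw [tau, tau, sum_update_of_mem (mem_range.2 (by omega)), sdiff_singleton_eq_erase,
    ← sum_erase_add _ _ (mem_range.2 (show j < M + 1 by omega))]
  ring

lemma hasDerivAt_comp_tau_update {Φ : ℝ → ℝ} {Φ' : ℝ} {j M : ℕ} (hj : j ≤ M) (t : ℕ → ℝ)
    (h : HasDerivAt Φ Φ' (tau t M)) :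
    HasDerivAt (fun s => Φ (tau (update t j s) M)) Φ' (t j) := by
  simp_rw [tau_update_of_le t hj]
  exact HasDerivAt.comp_add_const _ _ (by rwa [add_sub_cancel])

lemma sum_range_ite_lt_eq {G : Type*} [AddCommGroup G] (f g : ℕ → G) {j n : ℕ}
    (h : j < n) :
    ∑ m ∈ range n, (if j < m then f m else if j = m then f m - g m else 0)
      = ∑ m ∈ range n, f m - ∑ m ∈ range j, f m - g j := by
  induction n, h using Nat.le_induction with
  | base =>
    rw [sum_range_succ, sum_range_succ, if_neg (lt_irrefl j), if_pos rfl,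
      sum_congr rfl fun m hm => by rw [if_neg (by grind), if_neg (by grind)]]
    simp
  | succ n hn ih =>
    rw [sum_range_succ, ih, if_pos (by omega), sum_range_succ]
    abel

section Coefficients

variable (ρ : ℝ) (a : ℕ → ℕ → ℝ → ℝ)

/-- `∂_yᵏ` of the `m`-th summand of the triple sum in `cfun`, with `τ_{m-1}` replaced by `y`
and `tₘ` by `x`. -/
noncomputable def cSummand (m k : ℕ) (y x : ℝ) : ℝ :=
  ∑ r ∈ Icc 2 m, (-1 : ℝ) ^ (r - 1) * kfact ρ r * iIntPoly (r - 1) k (a m r) y x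

/-- `∂_yᵏ` of the last sum in `cfun`, with `τ_{n-1}` replaced by `y` and `tₙ` by `x`. -/
noncomputable def cTail (n k : ℕ) (y x : ℝ) : ℝ :=
  ∑ r ∈ Icc 1 n, (-1 : ℝ) ^ r * kfact ρ r * divPowDeriv (r - 1) k y * a n r x

/-- Closed form of `∂_{t₀}ᵏ cₙ`; the summands `m = 0, 1` vanish. -/
noncomputable def cDeriv (n k : ℕ) (t : ℕ → ℝ) : ℝ :=
  ∑ m ∈ range n, cSummand ρ a m k (tau t (m - 1)) (t m) + cTail ρ a n k (tau t (n - 1)) (t n)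

lemma hasDerivAt_cSummand_fst (m k : ℕ) (y x : ℝ) :
    HasDerivAt (fun y => cSummand ρ a m k y x) (cSummand ρ a m (k + 1) y x) y :=
  HasDerivAt.fun_sum fun _ _ => (hasDerivAt_iIntPoly_fst _ k _ y x).const_mul _

lemma hasDerivAt_cTail_fst (n k : ℕ) (y x : ℝ) :
    HasDerivAt (fun y => cTail ρ a n k y x) (cTail ρ a n (k + 1) y x) y :=
  HasDerivAt.fun_sum fun _ _ => ((hasDerivAt_divPowDeriv _ k y).const_mul _).mul_const _

lemma cTail_succ (m k : ℕ) (y x : ℝ) :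
    cTail ρ a m (k + 1) y x
      = ∑ r ∈ Icc 2 m, (-1 : ℝ) ^ r * kfact ρ r * divPowDeriv (r - 2) k y * a m r x := by
  rw [cTail, ← sum_subset (Icc_subset_Icc_left one_le_two)]
  · refine sum_congr rfl fun r hr => ?_
    obtain ⟨r, rfl⟩ : ∃ r', r = r' + 2 := ⟨r - 2, by grind⟩
    simp [divPowDeriv_succ_succ]
  · intro r hr hr2
    rw [show r = 1 by grind, divPowDeriv_of_lt (Nat.succ_pos k)]
    ring

lemma hasDerivAt_cSummand_snd {m : ℕ} (ha : ∀ r, Continuous (a m r)) (k : ℕ) (y x : ℝ) :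
    HasDerivAt (fun x => cSummand ρ a m k y x)
      (cSummand ρ a m (k + 1) y x - cTail ρ a m (k + 1) y x) x := by
  rw [cTail_succ, cSummand, ← sum_sub_distrib]
  refine HasDerivAt.fun_sum fun r hr => ?_
  obtain ⟨r, rfl⟩ : ∃ r', r = r' + 2 := ⟨r - 2, by grind⟩
  refine ((hasDerivAt_iIntPoly_snd (ha (r + 2)) r k y x).const_mul
    ((-1 : ℝ) ^ (r + 1) * kfact ρ (r + 2))).congr_deriv ?_
  rw [show r + 2 - 1 = r + 1 from rfl, Nat.add_sub_cancel]
  ring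

lemma cSummand_eq_zero_of_le {m k : ℕ} (h : m ≤ k + 1) (y x : ℝ) : cSummand ρ a m k y x = 0 :=
  sum_eq_zero fun r hr => by rw [iIntPoly_eq_zero_of_le (by grind), mul_zero]

lemma cTail_eq_zero_of_le {n k : ℕ} (h : n ≤ k) (y x : ℝ) : cTail ρ a n k y x = 0 :=
  sum_eq_zero fun r hr => by rw [divPowDeriv_of_lt (by grind)]; ring

lemma cDeriv_zero (n : ℕ) : cDeriv ρ a n 0 = cfun ρ a n := by
  funext t
  rw [cDeriv, cfun]
  congr 1
  · have hrange : ∑ m ∈ range n, cSummand ρ a m 0 (tau t (m - 1)) (t m)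
        = ∑ m ∈ Icc 2 (n - 1), cSummand ρ a m 0 (tau t (m - 1)) (t m) :=
      (sum_subset (fun m hm => by grind) fun m _ hm => sum_eq_zero fun r hr => by grind).symm
    rw [hrange]
    refine sum_congr rfl fun m _ => ?_
    refine sum_congr rfl fun r _ => ?_
    rw [iIntPoly, mul_sum]
    refine sum_congr rfl fun s _ => ?_
    rw [divPowDeriv_zero_right, Nat.sub_right_comm]
    ring
  · exact sum_congr rfl fun r _ => by rw [divPowDeriv_zero_right]; ring

lemma cDeriv_eq_zero_of_le {n k : ℕ} (h : n ≤ k) (t : ℕ → ℝ) : cDeriv ρ a n k t = 0 := by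
  rw [cDeriv, cTail_eq_zero_of_le ρ a h, add_zero]
  exact sum_eq_zero fun m hm => cSummand_eq_zero_of_le ρ a (by grind) _ _

lemma hasDerivAt_cSummand_update {m : ℕ} (ha : ∀ r, Continuous (a m r)) (k j : ℕ)
    (t : ℕ → ℝ) :
    HasDerivAt (fun s => cSummand ρ a m k (tau (update t j s) (m - 1)) (update t j s m))
      (if j < m then cSummand ρ a m (k + 1) (tau t (m - 1)) (t m)
        else if j = m then
          cSummand ρ a m (k + 1) (tau t (m - 1)) (t m) - cTail ρ a m (k + 1) (tau t (m - 1)) (t m)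
        else 0) (t j) := by
  rcases lt_trichotomy j m with hjm | rfl | hmj
  · simp only [if_pos hjm, update_of_ne hjm.ne']
    exact hasDerivAt_comp_tau_update (by omega) t (hasDerivAt_cSummand_fst ρ a m k _ _)
  · rw [if_neg (lt_irrefl j), if_pos rfl]
    rcases Nat.eq_zero_or_pos j with rfl | hj
    · simpa [cSummand, cTail] using hasDerivAt_const (t 0) (0 : ℝ)
    · simp only [tau_update_of_lt t (show j - 1 < j by omega), update_self]
      exact hasDerivAt_cSummand_snd ρ a ha k _ _
  · simp only [if_neg (show ¬ j < m by omega), if_neg hmj.ne', update_of_ne hmj.ne,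
      tau_update_of_lt t (show m - 1 < j by omega)]
    exact hasDerivAt_const _ _

lemma hasDerivAt_cDeriv_update (ha : ∀ m r, Continuous (a m r)) {n j : ℕ} (hj : j < n)
    (k : ℕ) (t : ℕ → ℝ) :
    HasDerivAt (fun s => cDeriv ρ a n k (update t j s))
      (cDeriv ρ a n (k + 1) t - cDeriv ρ a j (k + 1) t) (t j) := by
  have hsum := HasDerivAt.fun_sum fun m (_ : m ∈ range n) =>
    hasDerivAt_cSummand_update ρ a (ha m) k j t
  have htail := hasDerivAt_comp_tau_update (show j ≤ n - 1 by omega) t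
    (hasDerivAt_cTail_fst ρ a n k (tau t (n - 1)) (t n))
  simp only [cDeriv, update_of_ne hj.ne']
  refine (hsum.add htail).congr_deriv ?_
  rw [sum_range_ite_lt_eq _ _ hj]
  abel

lemma pd0iter_cfun (ha : ∀ m r, Continuous (a m r)) {n : ℕ} (hn : 0 < n) (k : ℕ) :
    pd0iter k (cfun ρ a n) = cDeriv ρ a n k := by
  induction k with
  | zero => exact (cDeriv_zero ρ a n).symm
  | succ k ih =>
    funext t
    rw [pd0iter, ih, pdG, (hasDerivAt_cDeriv_update ρ a ha hn k t).deriv,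
      cDeriv_eq_zero_of_le ρ a (Nat.zero_le _), sub_zero]

lemma uA_eq_cDeriv (ha : ∀ m r, Continuous (a m r)) {m i : ℕ} (hi : 1 ≤ i) (him : i ≤ m)
    (t : ℕ → ℝ) : uA ρ a m i t = (-1 : ℝ) ^ i / kfact ρ i * cDeriv ρ a m (i - 1) t := by
  rw [uA, if_neg (by omega)]
  rcases eq_or_ne i 1 with rfl | hi1
  · simp [kfact, cDeriv_zero]
  · rw [if_neg hi1, pd0iter_cfun ρ a ha (by omega)]

lemma pdG_uA (ha : ∀ m r, Continuous (a m r)) {n i j : ℕ} (hi : 1 ≤ i) (hin : i ≤ n)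
    (hj : j < n) (t : ℕ → ℝ) :
    pdG j (uA ρ a n i) t
      = (-1 : ℝ) ^ i / kfact ρ i * (cDeriv ρ a n i t - cDeriv ρ a j i t) := by
  have hfun : (fun s => uA ρ a n i (update t j s))
      = fun s => (-1 : ℝ) ^ i / kfact ρ i * cDeriv ρ a n (i - 1) (update t j s) :=
    funext fun s => uA_eq_cDeriv ρ a ha hi hin _
  rw [pdG, hfun, ((hasDerivAt_cDeriv_update ρ a ha hj (i - 1) t).const_mul _).deriv,
    Nat.sub_add_cancel hi]

lemma kappa_mul_neg_one_pow_div_kfact_succ {i : ℕ} (hi : 1 ≤ i) (hκ : kappa ρ (i + 1) ≠ 0) :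
    kappa ρ (i + 1) * ((-1 : ℝ) ^ (i + 1) / kfact ρ (i + 1)) = -((-1 : ℝ) ^ i / kfact ρ i) := by
  obtain ⟨i, rfl⟩ : ∃ i', i = i' + 1 := ⟨i - 1, by omega⟩
  rw [kfact, pow_succ]
  rcases eq_or_ne (kfact ρ (i + 1)) 0 with h | h
  · simp [h]
  · field_simp

end Coefficients

theorem stmt6_general (ρ : ℝ) (a : ℕ → ℕ → ℝ → ℝ) (ha : ∀ m r, Continuous (a m r))
    (n : ℕ) (hκ : ∀ m : ℕ, 2 ≤ m → m ≤ n → kappa ρ m ≠ 0) :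
    ∀ j : ℕ, j < n →
      (∀ t : ℕ → ℝ, pdG j (uA ρ a n n) t = 0)
      ∧ (∀ i : ℕ, max j 1 ≤ i → i ≤ n - 1 → ∀ t : ℕ → ℝ,
          pdG j (uA ρ a n i) t + kappa ρ (i + 1) * uA ρ a n (i + 1) t = 0)
      ∧ (∀ i : ℕ, 1 ≤ i → i ≤ j - 1 → ∀ t : ℕ → ℝ,
          pdG j (uA ρ a n i) t
            + kappa ρ (i + 1) * (uA ρ a n (i + 1) t - uA ρ a j (i + 1) t) = 0) := by
  intro j hj
  have hsign : ∀ i, 1 ≤ i → i < n → kappa ρ (i + 1) * ((-1 : ℝ) ^ (i + 1) / kfact ρ (i + 1))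
      = -((-1 : ℝ) ^ i / kfact ρ i) := fun i hi hin =>
    kappa_mul_neg_one_pow_div_kfact_succ ρ hi (hκ (i + 1) (by omega) (by omega))
  refine ⟨fun t => ?_, fun i hi hin t => ?_, fun i hi hij t => ?_⟩
  · rw [pdG_uA ρ a ha (by omega) le_rfl hj, cDeriv_eq_zero_of_le ρ a le_rfl,
      cDeriv_eq_zero_of_le ρ a hj.le]
    ring
  · rw [pdG_uA ρ a ha (by omega) (by omega) hj, uA_eq_cDeriv ρ a ha (by omega) (by omega),
      Nat.add_sub_cancel, cDeriv_eq_zero_of_le ρ a (show j ≤ i by omega)]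
    linear_combination cDeriv ρ a n i t * hsign i (by omega) (by omega)
  · rw [pdG_uA ρ a ha hi (by omega) hj, uA_eq_cDeriv ρ a ha (by omega) (by omega),
      uA_eq_cDeriv ρ a ha (by omega) (by omega), Nat.add_sub_cancel]
    linear_combination (cDeriv ρ a n i t - cDeriv ρ a j i t) * hsign i hi (by omega)

/-- The coefficients `u_{m,i}` satisfy, for every `0 ≤ j < n`:
(a) `∂u_{n,n}/∂tⱼ = 0`;
(b) `∂u_{n,i}/∂tⱼ + κ_{i+1} u_{n,i+1} = 0` for `max(j,1) ≤ i ≤ n-1`;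
(c) `∂u_{n,i}/∂tⱼ + κ_{i+1}(u_{n,i+1} - u_{j,i+1}) = 0` for `1 ≤ i ≤ j-1`. -/
theorem stmt6 (ρ : ℝ) (a : ℕ → ℕ → ℝ → ℝ) (ha : ∀ m r, Continuous (a m r))
    (n : ℕ) (hn : 1 ≤ n)
    (hκ : ∀ m : ℕ, 2 ≤ m → m ≤ n → kappa ρ m ≠ 0) :
    ∀ j : ℕ, j < n →
      (∀ t : ℕ → ℝ, pdG j (uA ρ a n n) t = 0)
      ∧ (∀ i : ℕ, max j 1 ≤ i → i ≤ n - 1 → ∀ t : ℕ → ℝ,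
          pdG j (uA ρ a n i) t + kappa ρ (i + 1) * uA ρ a n (i + 1) t = 0)
      ∧ (∀ i : ℕ, 1 ≤ i → i ≤ j - 1 → ∀ t : ℕ → ℝ,
          pdG j (uA ρ a n i) t
            + kappa ρ (i + 1) * (uA ρ a n (i + 1) t - uA ρ a j (i + 1) t) = 0) :=
  stmt6_general ρ a ha n hκ
end

section
/- For each 1 ≤ m ≤ n define u_{m,i}(t₀, …, t_m) = Σ_{r=i}^{m−1} c_{r,i}(t_r) e^{−κ_i τ_{r−1}} + a_{m,i}(t_m) e^{−κ_i τ_{m−1}} for 1 ≤ i ≤ m, with the convention u_{m,i} = 0 for i > m and u_{0,i} = 0. Then for every 0 ≤ j < n the following identities hold: (a) ∂u_{n,i}/∂t_j + κ_i u_{n,i} = 0 for j+1 ≤ i ≤ n; (b) ∂u_{n,i}/∂t_j + κ_i(u_{n,i} − u_{j,i}) = 0 for 1 ≤ i ≤ j. -/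
/-- Partial derivative `∂f/∂tⱼ` of a function of the variables `t = (t₀, t₁, t₂, …)`. -/
noncomputable def pd (j : ℕ) (f : (ℕ → ℝ) → ℝ) (t : ℕ → ℝ) : ℝ :=
  deriv (fun s => f (Function.update t j s)) (t j)

/-- The coefficients
`u_{m,i}(t) = Σ_{r=i}^{m-1} c_{r,i}(t_r) e^{-κᵢ τ_{r-1}} + a_{m,i}(tₘ) e^{-κᵢ τ_{m-1}}`
for `1 ≤ i ≤ m`, with the conventions `u_{m,i} = 0` for `i > m` and `u_{0,i} = 0`. -/
noncomputable def uB (ρ : ℝ) (a c : ℕ → ℕ → ℝ → ℝ) (m i : ℕ) (t : ℕ → ℝ) : ℝ :=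
  if 1 ≤ i ∧ i ≤ m then
    (∑ r ∈ Finset.Ico i m, c r i (t r) * Real.exp (-(kappa ρ i) * tau t (r - 1)))
      + a m i (t m) * Real.exp (-(kappa ρ i) * tau t (m - 1))
  else 0

/-!
Every term of `u_{n,i}` has the form `f(t_r) e^{-κᵢ τ_{r-1}}`. As a function of `t_j` such a term
is constant when `r < j`, and when `r > j` it depends on `t_j` only through `τ_{r-1}`, so its
`t_j`-derivative is `-κᵢ` times itself; the last term, with `r = n > j`, is of the second kind.
Hence `∂u_{n,i}/∂t_j = -κᵢ u_{n,i}` when `i > j`. When `i ≤ j` the term `r = j` contributes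
`c'_{j,i}(t_j) e^{-κᵢ τ_{j-1}} = κᵢ (a_{j,i} - c_{j,i})(t_j) e^{-κᵢ τ_{j-1}}`, and the terms
`r < j` together with `a_{j,i}(t_j) e^{-κᵢ τ_{j-1}}` make up `u_{j,i}`.
-/

open Function Finset

section Tau

variable (t : ℕ → ℝ) {j m : ℕ} (s : ℝ)

lemma tau_update_of_lt_s12 (hm : m < j) : tau (update t j s) m = tau t m :=
  sum_congr rfl fun k hk => update_of_ne (by simp at hk; omega) _ _

lemma hasDerivAt_tau_update (hjm : j ≤ m) :
    HasDerivAt (fun s => tau (update t j s) m) 1 (t j) := by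
  have hj : j ∈ range (m + 1) := mem_range.2 (Nat.lt_succ_of_le hjm)
  simp only [tau, sum_update_of_mem hj]
  exact (hasDerivAt_id _).add_const _

end Tau

noncomputable def expWeighted (κ : ℝ) (f : ℝ → ℝ) (r : ℕ) (t : ℕ → ℝ) : ℝ :=
  f (t r) * Real.exp (-κ * tau t (r - 1))

section ExpWeighted

variable (κ : ℝ) (f : ℝ → ℝ) (t : ℕ → ℝ) {j r : ℕ}

lemma expWeighted_update_of_lt (hr : r < j) (s : ℝ) :
    expWeighted κ f r (update t j s) = expWeighted κ f r t := by
  rw [expWeighted, expWeighted, update_of_ne hr.ne, tau_update_of_lt_s12 t s (by omega)]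

lemma hasDerivAt_expWeighted_update_self (hj : 0 < j) {f' : ℝ} (hf : HasDerivAt f f' (t j)) :
    HasDerivAt (fun s => expWeighted κ f j (update t j s))
      (f' * Real.exp (-κ * tau t (j - 1))) (t j) := by
  simp only [expWeighted, update_self, tau_update_of_lt_s12 t _ (Nat.sub_lt hj one_pos)]
  exact hf.mul_const _

lemma hasDerivAt_expWeighted_update_of_gt (hr : j < r) :
    HasDerivAt (fun s => expWeighted κ f r (update t j s)) (-κ * expWeighted κ f r t) (t j) := by
  have hexp := (((hasDerivAt_tau_update t (j := j) (m := r - 1) (by omega)).const_mul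
    (-κ)).exp).const_mul (f (t r))
  simp only [expWeighted, update_of_ne hr.ne', update_eq_self] at hexp ⊢
  exact hexp.congr_deriv (by ring)

end ExpWeighted

noncomputable def uTail (ρ : ℝ) (a c : ℕ → ℕ → ℝ → ℝ) (m i lo : ℕ) (t : ℕ → ℝ) : ℝ :=
  (∑ r ∈ Ico lo m, expWeighted (kappa ρ i) (c r i) r t) + expWeighted (kappa ρ i) (a m i) m t

section UTail

variable (ρ : ℝ) (a c : ℕ → ℕ → ℝ → ℝ) {m i : ℕ} (t : ℕ → ℝ)

lemma uB_eq_uTail (hi : 1 ≤ i) (him : i ≤ m) : uB ρ a c m i t = uTail ρ a c m i i t :=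
  if_pos ⟨hi, him⟩

lemma hasDerivAt_uTail_update {j lo : ℕ} (hlo : j < lo) (hjm : j < m) :
    HasDerivAt (fun s => uTail ρ a c m i lo (update t j s))
      (-kappa ρ i * uTail ρ a c m i lo t) (t j) := by
  have hsum := HasDerivAt.fun_sum (u := Ico lo m) fun r hr =>
    hasDerivAt_expWeighted_update_of_gt (kappa ρ i) (c r i) t (j := j) (r := r)
      (by simp at hr; omega)
  exact (hsum.add (hasDerivAt_expWeighted_update_of_gt (kappa ρ i) (a m i) t hjm)).congr_deriv
    (by rw [uTail, mul_add, mul_sum])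

lemma uTail_eq_add {j lo : ℕ} (hlo : lo ≤ j) (hjm : j < m) :
    uTail ρ a c m i lo t =
      (∑ r ∈ Ico lo j, expWeighted (kappa ρ i) (c r i) r t)
        + expWeighted (kappa ρ i) (c j i) j t + uTail ρ a c m i (j + 1) t := by
  rw [uTail, uTail, ← sum_Ico_consecutive _ hlo hjm.le, sum_eq_sum_Ico_succ_bot hjm]
  ring

lemma pd_uB_add_kappa_mul {n j : ℕ} (hji : j < i) (hin : i ≤ n) :
    pd j (uB ρ a c n i) t + kappa ρ i * uB ρ a c n i t = 0 := by
  have hu : ∀ t', uB ρ a c n i t' = uTail ρ a c n i i t' :=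
    fun t' => uB_eq_uTail ρ a c t' (by omega) hin
  rw [pd, funext fun s => hu (update t j s),
    (hasDerivAt_uTail_update ρ a c t hji (hji.trans_le hin)).deriv, hu]
  ring

lemma pd_uB_add_kappa_mul_sub {n j : ℕ}
    (hc : HasDerivAt (c j i) (kappa ρ i * a j i (t j) - kappa ρ i * c j i (t j)) (t j))
    (hi : 1 ≤ i) (hij : i ≤ j) (hjn : j < n) :
    pd j (uB ρ a c n i) t + kappa ρ i * (uB ρ a c n i t - uB ρ a c j i t) = 0 := by
  set S := ∑ r ∈ Ico i j, expWeighted (kappa ρ i) (c r i) r t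
  have hsplit : ∀ s, uB ρ a c n i (update t j s) =
      S + expWeighted (kappa ρ i) (c j i) j (update t j s)
        + uTail ρ a c n i (j + 1) (update t j s) := fun s => by
    rw [uB_eq_uTail ρ a c _ hi (by omega), uTail_eq_add ρ a c _ hij hjn]
    congr 2
    exact sum_congr rfl fun r hr => expWeighted_update_of_lt _ _ t (by simp at hr; omega) s
  have hderiv := ((hasDerivAt_const (t j) S).fun_add
    (hasDerivAt_expWeighted_update_self (kappa ρ i) (c j i) t (by omega) hc)).fun_add
    (hasDerivAt_uTail_update ρ a c t (i := i) j.lt_add_one hjn)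
  have hn : uB ρ a c n i t =
      S + expWeighted (kappa ρ i) (c j i) j t + uTail ρ a c n i (j + 1) t := by
    simpa only [update_eq_self] using hsplit (t j)
  have hj : uB ρ a c j i t = S + expWeighted (kappa ρ i) (a j i) j t :=
    uB_eq_uTail ρ a c t hi hij
  rw [pd, funext hsplit, hderiv.deriv, hn, hj]
  simp only [expWeighted]
  ring

end UTail

theorem stmt12_general (ρ : ℝ) (n : ℕ)
    (a : ℕ → ℕ → ℝ → ℝ)
    (c : ℕ → ℕ → ℝ → ℝ)
    (hc : ∀ (r i : ℕ) (s : ℝ),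
      HasDerivAt (c r i) (kappa ρ i * a r i s - kappa ρ i * c r i s) s) :
    ∀ j : ℕ, j < n →
      (∀ i : ℕ, j + 1 ≤ i → i ≤ n → ∀ t : ℕ → ℝ,
        pd j (uB ρ a c n i) t + kappa ρ i * uB ρ a c n i t = 0)
      ∧ (∀ i : ℕ, 1 ≤ i → i ≤ j → ∀ t : ℕ → ℝ,
        pd j (uB ρ a c n i) t + kappa ρ i * (uB ρ a c n i t - uB ρ a c j i t) = 0) :=
  fun _ hjn =>
    ⟨fun _ hji hin t => pd_uB_add_kappa_mul ρ a c t hji hin,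
      fun _ hi hij t => pd_uB_add_kappa_mul_sub ρ a c t (hc _ _ _) hi hij hjn⟩

/-- The coefficients `u_{m,i}` satisfy, for every `0 ≤ j < n`:
(a) `∂u_{n,i}/∂tⱼ + κᵢ u_{n,i} = 0` for `j+1 ≤ i ≤ n`;
(b) `∂u_{n,i}/∂tⱼ + κᵢ(u_{n,i} - u_{j,i}) = 0` for `1 ≤ i ≤ j`. -/
theorem stmt12 (ρ : ℝ) (n : ℕ) (hn : 1 ≤ n)
    (a : ℕ → ℕ → ℝ → ℝ) (ha : ∀ m i, Continuous (a m i))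
    (c : ℕ → ℕ → ℝ → ℝ)
    (hc : ∀ (r i : ℕ) (s : ℝ),
      HasDerivAt (c r i) (kappa ρ i * a r i s - kappa ρ i * c r i s) s)
    (hc0 : ∀ r i : ℕ, c r i 0 = 0) :
    ∀ j : ℕ, j < n →
      (∀ i : ℕ, j + 1 ≤ i → i ≤ n → ∀ t : ℕ → ℝ,
        pd j (uB ρ a c n i) t + kappa ρ i * uB ρ a c n i t = 0)
      ∧ (∀ i : ℕ, 1 ≤ i → i ≤ j → ∀ t : ℕ → ℝ,
        pd j (uB ρ a c n i) t + kappa ρ i * (uB ρ a c n i t - uB ρ a c j i t) = 0) :=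
  stmt12_general ρ n a c hc
end
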